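/- Let n be a positive integer and let a₁,…,aₙ and b₁,…,bₙ be positive real numbers. Define T = Σ_{k=1}^n aₖ/bₖ and, for m = 1, 2, 3, S^(m) = Σ_{k=1}^n Σ_{l=1}^n aₖaₗ/(bₖ+bₗ)^m. Then T² ≤ S^(1) + 2·S^(2) + 2·S^(3). -/

import Mathlib

/-!
With `f t = ∑ k, a k * exp (-(b k * t))` one has `T = ∫₀^∞ f`. Writing
`f = (f · (1 + t)) · (1 + t)⁻¹`, Cauchy–Schwarz on `(0, ∞)` and `∫₀^∞ (1 + t)⁻² = 1` give
`T² ≤ ∫₀^∞ f² (1 + t)²`; expanding the square and using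
`∫₀^∞ (1 + t)² e^{-ct} = 1/c + 2/c² + 2/c³` with `c = b k + b l` turns the right-hand side
into `S⁽¹⁾ + 2 S⁽²⁾ + 2 S⁽³⁾`.
-/

open Real MeasureTheory Set Filter

lemma sq_integral_mul_le_integral_sq_mul_integral_sq {α : Type*} [MeasurableSpace α]
    {μ : Measure α} {g h : α → ℝ} (hg : Integrable (fun x => g x ^ 2) μ)
    (hh : Integrable (fun x => h x ^ 2) μ) (hgh : Integrable (fun x => g x * h x) μ) :
    (∫ x, g x * h x ∂μ) ^ 2 ≤ (∫ x, g x ^ 2 ∂μ) * ∫ x, h x ^ 2 ∂μ := by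
  have hquad : ∀ s : ℝ, 0 ≤ (∫ x, h x ^ 2 ∂μ) * (s * s) + 2 * (∫ x, g x * h x ∂μ) * s
      + ∫ x, g x ^ 2 ∂μ := by
    intro s
    have hpt : (fun x => (g x + s * h x) ^ 2)
        = fun x => (s * s * h x ^ 2 + 2 * s * (g x * h x)) + g x ^ 2 := by
      funext x; ring
    have h1 : Integrable (fun x => s * s * h x ^ 2 + 2 * s * (g x * h x)) μ :=
      (hh.const_mul _).add (hgh.const_mul _)
    have hexp : ∫ x, (g x + s * h x) ^ 2 ∂μ = (∫ x, h x ^ 2 ∂μ) * (s * s)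
        + 2 * (∫ x, g x * h x ∂μ) * s + ∫ x, g x ^ 2 ∂μ := by
      rw [hpt, integral_add h1 hg, integral_add (hh.const_mul _) (hgh.const_mul _),
        integral_const_mul, integral_const_mul]
      ring
    exact hexp ▸ integral_nonneg fun x => sq_nonneg _
  have := discrim_le_zero hquad
  rw [discrim] at this
  linarith

lemma integrableOn_pow_mul_exp_neg_mul_Ioi (m : ℕ) {c : ℝ} (hc : 0 < c) :
    IntegrableOn (fun t : ℝ => t ^ m * exp (-(c * t))) (Ioi 0) := by
  have hm : (-1 : ℝ) < m := by linarith [m.cast_nonneg (α := ℝ)]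
  simpa [rpow_natCast, rpow_one, neg_mul] using
    integrableOn_rpow_mul_exp_neg_mul_rpow hm one_pos hc

lemma integral_pow_mul_exp_neg_mul_Ioi (m : ℕ) {c : ℝ} (hc : 0 < c) :
    ∫ t in Ioi 0, t ^ m * exp (-(c * t)) = m.factorial / c ^ (m + 1) := by
  have h := integral_rpow_mul_exp_neg_mul_Ioi (a := m + 1) (by positivity) hc
  rw [add_sub_cancel_right, Gamma_nat_eq_factorial, ← Nat.cast_add_one, rpow_natCast] at h
  simpa [div_eq_inv_mul, mul_comm] using h

lemma integrableOn_exp_neg_mul_Ioi {c : ℝ} (hc : 0 < c) :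
    IntegrableOn (fun t : ℝ => exp (-(c * t))) (Ioi 0) := by
  simpa using integrableOn_pow_mul_exp_neg_mul_Ioi 0 hc

lemma integral_exp_neg_mul_Ioi {c : ℝ} (hc : 0 < c) :
    ∫ t in Ioi 0, exp (-(c * t)) = 1 / c := by
  simpa using integral_pow_mul_exp_neg_mul_Ioi 0 hc

lemma integrableOn_one_add_sq_mul_exp_neg_mul_Ioi {c : ℝ} (hc : 0 < c) :
    IntegrableOn (fun t : ℝ => (1 + t) ^ 2 * exp (-(c * t))) (Ioi 0) := by
  have h : IntegrableOn (fun t : ℝ => t ^ 0 * exp (-(c * t)) + 2 * (t ^ 1 * exp (-(c * t)))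
      + t ^ 2 * exp (-(c * t))) (Ioi 0) :=
    ((integrableOn_pow_mul_exp_neg_mul_Ioi 0 hc).add
      ((integrableOn_pow_mul_exp_neg_mul_Ioi 1 hc).const_mul 2)).add
      (integrableOn_pow_mul_exp_neg_mul_Ioi 2 hc)
  exact h.congr_fun (fun t _ => by ring) measurableSet_Ioi

lemma integral_one_add_sq_mul_exp_neg_mul_Ioi {c : ℝ} (hc : 0 < c) :
    ∫ t in Ioi 0, (1 + t) ^ 2 * exp (-(c * t)) = 1 / c + 2 / c ^ 2 + 2 / c ^ 3 := by
  have hpt : (fun t : ℝ => (1 + t) ^ 2 * exp (-(c * t))) = fun t =>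
      (t ^ 0 * exp (-(c * t)) + 2 * (t ^ 1 * exp (-(c * t)))) + t ^ 2 * exp (-(c * t)) := by
    funext t; ring
  have h1 := (integrableOn_pow_mul_exp_neg_mul_Ioi 1 hc).const_mul 2
  have h01 : IntegrableOn (fun t : ℝ => t ^ 0 * exp (-(c * t)) + 2 * (t ^ 1 * exp (-(c * t))))
      (Ioi 0) := (integrableOn_pow_mul_exp_neg_mul_Ioi 0 hc).add h1
  rw [hpt, integral_add h01 (integrableOn_pow_mul_exp_neg_mul_Ioi 2 hc),
    integral_add (integrableOn_pow_mul_exp_neg_mul_Ioi 0 hc) h1, integral_const_mul,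
    integral_pow_mul_exp_neg_mul_Ioi 0 hc, integral_pow_mul_exp_neg_mul_Ioi 1 hc,
    integral_pow_mul_exp_neg_mul_Ioi 2 hc]
  norm_num [Nat.factorial]
  ring

lemma hasDerivAt_neg_inv_one_add {x : ℝ} (hx : 0 ≤ x) :
    HasDerivAt (fun t : ℝ => -(1 + t)⁻¹) (((1 + x)⁻¹) ^ 2) x := by
  have h : HasDerivAt (fun t : ℝ => -(1 + t)⁻¹) (-(-1 / (1 + x) ^ 2)) x :=
    (((hasDerivAt_id' x).const_add 1).inv (by positivity)).neg
  rwa [neg_div, neg_neg, one_div, ← inv_pow] at h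

lemma tendsto_neg_inv_one_add_atTop : Tendsto (fun t : ℝ => -(1 + t)⁻¹) atTop (nhds 0) := by
  simpa using (tendsto_atTop_add_const_left _ (1 : ℝ) tendsto_id).inv_tendsto_atTop.neg

lemma integrableOn_inv_one_add_sq_Ioi :
    IntegrableOn (fun t : ℝ => ((1 + t)⁻¹) ^ 2) (Ioi 0) :=
  integrableOn_Ioi_deriv_of_nonneg' (fun _ hx => hasDerivAt_neg_inv_one_add hx)
    (fun _ _ => by positivity) tendsto_neg_inv_one_add_atTop

lemma integral_inv_one_add_sq_Ioi : ∫ t in Ioi (0 : ℝ), ((1 + t)⁻¹) ^ 2 = 1 := by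
  simpa using integral_Ioi_of_hasDerivAt_of_nonneg' (fun _ hx => hasDerivAt_neg_inv_one_add hx)
    (fun _ _ => by positivity) tendsto_neg_inv_one_add_atTop

section ExpSum

variable {ι : Type*} [Fintype ι] (a b : ι → ℝ)

noncomputable def expSum (t : ℝ) : ℝ := ∑ i, a i * exp (-(b i * t))

variable {b}

lemma integral_expSum_Ioi (hb : ∀ i, 0 < b i) : ∫ t in Ioi 0, expSum a b t = ∑ i, a i / b i := by
  unfold expSum
  rw [integral_finsetSum _ fun i _ => (integrableOn_exp_neg_mul_Ioi (hb i)).const_mul (a i)]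
  refine Finset.sum_congr rfl fun i _ => ?_
  rw [integral_const_mul, integral_exp_neg_mul_Ioi (hb i), mul_one_div]

lemma integrableOn_expSum_Ioi (hb : ∀ i, 0 < b i) : IntegrableOn (expSum a b) (Ioi 0) :=
  integrable_finsetSum _ fun i _ => (integrableOn_exp_neg_mul_Ioi (hb i)).const_mul (a i)

lemma expSum_mul_sq (t w : ℝ) :
    (expSum a b t * w) ^ 2 = ∑ i, ∑ j, a i * a j * (w ^ 2 * exp (-((b i + b j) * t))) := by
  simp_rw [expSum, mul_pow, sq (∑ i, _), Finset.sum_mul_sum, Finset.sum_mul]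
  refine Finset.sum_congr rfl fun i _ => Finset.sum_congr rfl fun j _ => ?_
  rw [add_mul, neg_add, exp_add]
  ring

lemma integrableOn_expSum_mul_one_add_sq_Ioi (hb : ∀ i, 0 < b i) :
    IntegrableOn (fun t => (expSum a b t * (1 + t)) ^ 2) (Ioi 0) := by
  simp_rw [expSum_mul_sq]
  exact integrable_finsetSum _ fun i _ => integrable_finsetSum _ fun j _ =>
    (integrableOn_one_add_sq_mul_exp_neg_mul_Ioi (add_pos (hb i) (hb j))).const_mul _

lemma integral_expSum_mul_one_add_sq_Ioi (hb : ∀ i, 0 < b i) :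
    ∫ t in Ioi 0, (expSum a b t * (1 + t)) ^ 2 = ∑ i, ∑ j, a i * a j *
      (1 / (b i + b j) + 2 / (b i + b j) ^ 2 + 2 / (b i + b j) ^ 3) := by
  simp_rw [expSum_mul_sq]
  rw [integral_finsetSum _ fun i _ => integrable_finsetSum _ fun j _ =>
    (integrableOn_one_add_sq_mul_exp_neg_mul_Ioi (add_pos (hb i) (hb j))).const_mul _]
  refine Finset.sum_congr rfl fun i _ => ?_
  rw [integral_finsetSum _ fun j _ =>
    (integrableOn_one_add_sq_mul_exp_neg_mul_Ioi (add_pos (hb i) (hb j))).const_mul _]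
  refine Finset.sum_congr rfl fun j _ => ?_
  rw [integral_const_mul, integral_one_add_sq_mul_exp_neg_mul_Ioi (add_pos (hb i) (hb j))]

end ExpSum

open Real Finset

theorem sum_sq_le_S1_add_two_S2_add_two_S3_general
    (n : ℕ) (a b : Fin n → ℝ) (hb : ∀ i, 0 < b i) :
    (∑ k, a k / b k) ^ 2 ≤
      (∑ k, ∑ l, a k * a l / (b k + b l) ^ 1) +
      2 * (∑ k, ∑ l, a k * a l / (b k + b l) ^ 2) +
      2 * (∑ k, ∑ l, a k * a l / (b k + b l) ^ 3) := by
  have hcancel : Set.EqOn (fun t => expSum a b t * (1 + t) * (1 + t)⁻¹) (expSum a b)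
      (Set.Ioi 0) := fun t ht => mul_inv_cancel_right₀ (by linarith [Set.mem_Ioi.mp ht]) _
  have hT : ∑ k, a k / b k = ∫ t in Set.Ioi 0, expSum a b t * (1 + t) * (1 + t)⁻¹ := by
    rw [setIntegral_congr_fun measurableSet_Ioi hcancel, integral_expSum_Ioi a hb]
  calc (∑ k, a k / b k) ^ 2
      ≤ (∫ t in Set.Ioi 0, (expSum a b t * (1 + t)) ^ 2) *
          ∫ t in Set.Ioi 0, ((1 + t)⁻¹) ^ 2 := by
        rw [hT]
        exact sq_integral_mul_le_integral_sq_mul_integral_sq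
          (integrableOn_expSum_mul_one_add_sq_Ioi a hb) integrableOn_inv_one_add_sq_Ioi
          ((integrableOn_expSum_Ioi a hb).congr_fun hcancel.symm measurableSet_Ioi)
    _ = ∑ k, ∑ l, a k * a l *
          (1 / (b k + b l) + 2 / (b k + b l) ^ 2 + 2 / (b k + b l) ^ 3) := by
      rw [integral_inv_one_add_sq_Ioi, mul_one, integral_expSum_mul_one_add_sq_Ioi a hb]
    _ = _ := by
      simp only [mul_sum, ← sum_add_distrib]
      exact sum_congr rfl fun k _ => sum_congr rfl fun l _ => by ring

theorem sum_sq_le_S1_add_two_S2_add_two_S3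
    (n : ℕ) (hn : 0 < n) (a b : Fin n → ℝ)
    (ha : ∀ i, 0 < a i) (hb : ∀ i, 0 < b i) :
    (∑ k, a k / b k) ^ 2 ≤
      (∑ k, ∑ l, a k * a l / (b k + b l) ^ 1) +
      2 * (∑ k, ∑ l, a k * a l / (b k + b l) ^ 2) +
      2 * (∑ k, ∑ l, a k * a l / (b k + b l) ^ 3) :=
  sum_sq_le_S1_add_two_S2_add_two_S3_general n a b hb
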